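/- arXiv:1212.3660 — 10 statements merged into one kernel-verified Lean document; each statement's English description precedes it below -/
import Mathlib

section
/- Suppose the Arnoldi relations M Z_m = V_{m+1} H̄_m and (K + τM) Z_m = V_m hold, where V_m consists of the first m columns of V_{m+1} and H̄_m is an (m+1)×m matrix. Then for any shift σ ∈ ℂ, (K + σM) Z_m = V_{m+1} H̄_m(σ; τ), where H̄_m(σ; τ) = [I_m; 0] + (σ − τ) H̄_m, with [I_m; 0] the (m+1)×m matrix whose top m×m block is the identity and last row is zero. -/
open Matrix

theorem stmt3 {n m : ℕ} (K M : Matrix (Fin n) (Fin n) ℂ)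
    (Z : Matrix (Fin n) (Fin m) ℂ) (V : Matrix (Fin n) (Fin (m + 1)) ℂ)
    (H : Matrix (Fin (m + 1)) (Fin m) ℂ) (σ τ : ℂ)
    (h1 : M * Z = V * H)
    (h2 : (K + τ • M) * Z = V.submatrix id Fin.castSucc) :
    (K + σ • M) * Z =
      V * ((Matrix.of fun (i : Fin (m + 1)) (j : Fin m) => if (i : ℕ) = (j : ℕ) then (1 : ℂ) else 0) +
        (σ - τ) • H) := by
  have key : V * (Matrix.of fun (i : Fin (m + 1)) (j : Fin m) =>
      if (i : ℕ) = (j : ℕ) then (1 : ℂ) else 0) = V.submatrix id Fin.castSucc := by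
    ext i j
    simp only [mul_apply, Matrix.of_apply, submatrix_apply, id]
    rw [Finset.sum_eq_single (Fin.castSucc j)]
    · simp
    · intro k _ hk
      rw [if_neg, mul_zero]
      intro h
      exact hk (Fin.ext h)
    · simp
  have : (K + σ • M) * Z = (K + τ • M) * Z + (σ - τ) • (M * Z) := by
    rw [Matrix.add_mul, Matrix.add_mul, Matrix.smul_mul, Matrix.smul_mul]
    module
  rw [this, h1, h2, Matrix.mul_add, key, Matrix.mul_smul]
end

section
/- Suppose the flexible Arnoldi relations M Z_m = V_{m+1} H̄_m and K Z_m + M Z_m T_m = V_m hold, where T_m = diag(τ_1, ..., τ_m) is a diagonal matrix of preconditioner shifts and V_m consists of the first m columns of V_{m+1}. Then for any σ ∈ ℂ, (K + σM) Z_m = V_{m+1} H̄_m(σ; T_m), where H̄_m(σ; T_m) = [I_m; 0] + H̄_m (σ I_m − T_m). -/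
open Matrix

theorem stmt4 {n m : ℕ} (K M : Matrix (Fin n) (Fin n) ℂ)
    (Z : Matrix (Fin n) (Fin m) ℂ) (V : Matrix (Fin n) (Fin (m + 1)) ℂ)
    (H : Matrix (Fin (m + 1)) (Fin m) ℂ) (τs : Fin m → ℂ) (σ : ℂ)
    (h1 : M * Z = V * H)
    (h2 : K * Z + M * Z * Matrix.diagonal τs = V.submatrix id Fin.castSucc) :
    (K + σ • M) * Z =
      V * ((Matrix.of fun (i : Fin (m + 1)) (j : Fin m) => if (i : ℕ) = (j : ℕ) then (1 : ℂ) else 0) +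
        H * (σ • 1 - Matrix.diagonal τs)) := by
  have key : V * (Matrix.of fun (i : Fin (m + 1)) (j : Fin m) =>
      if (i : ℕ) = (j : ℕ) then (1 : ℂ) else 0) = V.submatrix id Fin.castSucc := by
    ext i j
    simp only [mul_apply, Matrix.of_apply, submatrix_apply, id_eq]
    rw [Finset.sum_eq_single (Fin.castSucc j)]
    · simp
    · intro k _ hk
      have : (k : ℕ) ≠ (j : ℕ) := by
        intro h
        exact hk (Fin.ext (by simpa using h))
      simp [this]
    · simp
  rw [Matrix.mul_add, key, ← Matrix.mul_assoc, ← h1, ← h2, Matrix.mul_sub,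
    Matrix.mul_smul, Matrix.mul_one, Matrix.add_mul, Matrix.smul_mul]
  abel
end

section
/- Suppose the flexible Arnoldi relations M Z_m = V_{m+1} H̄_m and K Z_m + M Z_m T_m = V_m hold with M invertible. Then for any σ ∈ ℂ, V_{m+1} H̄_m(σ; T_m) = (K + σM) M^{-1} V_{m+1} H̄_m, where H̄_m(σ; T_m) = [I_m; 0] + H̄_m (σ I_m − T_m). -/
open Matrix

theorem stmt5 {n m : ℕ} (K M : Matrix (Fin n) (Fin n) ℂ) (hM : IsUnit M)
    (Z : Matrix (Fin n) (Fin m) ℂ) (V : Matrix (Fin n) (Fin (m + 1)) ℂ)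
    (H : Matrix (Fin (m + 1)) (Fin m) ℂ) (τs : Fin m → ℂ) (σ : ℂ)
    (h1 : M * Z = V * H)
    (h2 : K * Z + M * Z * Matrix.diagonal τs = V.submatrix id Fin.castSucc) :
    V * ((Matrix.of fun (i : Fin (m + 1)) (j : Fin m) => if (i : ℕ) = (j : ℕ) then (1 : ℂ) else 0) +
        H * (σ • 1 - Matrix.diagonal τs)) =
      (K + σ • M) * M⁻¹ * V * H := by
  have hZ : M⁻¹ * (V * H) = Z := by
    rw [← h1, ← Matrix.mul_assoc, Matrix.nonsing_inv_mul M ((Matrix.isUnit_iff_isUnit_det M).mp hM), Matrix.one_mul]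
  have hE : V * (Matrix.of fun (i : Fin (m + 1)) (j : Fin m) =>
      if (i : ℕ) = (j : ℕ) then (1 : ℂ) else 0) = V.submatrix id Fin.castSucc := by
    ext i j
    rw [Matrix.mul_apply]
    rw [Finset.sum_eq_single (Fin.castSucc j)]
    · simp
    · intro k _ hk
      have : (k : ℕ) ≠ (j : ℕ) := by
        intro h
        exact hk (Fin.ext (by simpa using h))
      simp [this]
    · simp
  calc V * ((Matrix.of fun (i : Fin (m + 1)) (j : Fin m) =>
        if (i : ℕ) = (j : ℕ) then (1 : ℂ) else 0) + H * (σ • 1 - Matrix.diagonal τs))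
      = V.submatrix id Fin.castSucc + V * H * (σ • 1 - Matrix.diagonal τs) := by
        rw [Matrix.mul_add, hE, Matrix.mul_assoc]
    _ = (K + σ • M) * Z := by
        rw [← h2, ← h1]
        rw [Matrix.mul_sub, Matrix.add_mul]
        rw [Matrix.mul_smul, Matrix.mul_one, Matrix.smul_mul]
        abel
    _ = (K + σ • M) * M⁻¹ * V * H := by
        rw [Matrix.mul_assoc, Matrix.mul_assoc, hZ]
end

section
/- Assume the flexible Arnoldi relations M Z_m = V_{m+1} H̄_m and K Z_m + M Z_m T_m = V_m with M invertible and V_{m+1} having orthonormal columns. Let (θ, f) satisfy the generalized eigenvalue problem H_m(σ; T_m) f = θ H_m f, where H_m and H_m(σ; T_m) are the top m×m blocks of H̄_m and H̄_m(σ; T_m). Then the Ritz vector u = V_{m+1} H̄_m f satisfies (K + σM) M^{-1} u − θ u = − h_{m+1,m} (τ_m + θ − σ)(e_m^* f) v_{m+1}; in particular, (K + σM) M^{-1} u − θ u is orthogonal to the column span of V_m. -/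
open Matrix

theorem stmt6 {n m : ℕ} (K M : Matrix (Fin n) (Fin n) ℂ) (hM : IsUnit M)
    (Z : Matrix (Fin n) (Fin (m + 1)) ℂ) (V : Matrix (Fin n) (Fin (m + 2)) ℂ)
    (hV : Vᴴ * V = 1)
    (H : Matrix (Fin (m + 2)) (Fin (m + 1)) ℂ) (τs : Fin (m + 1) → ℂ)
    (σ θ : ℂ) (f : Fin (m + 1) → ℂ)
    (h1 : M * Z = V * H)
    (h2 : K * Z + M * Z * Matrix.diagonal τs = V.submatrix id Fin.castSucc)
    (hH : ∀ j : Fin (m + 1), j ≠ Fin.last m → H (Fin.last (m + 1)) j = 0)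
    (heig :
      (1 + H.submatrix Fin.castSucc id * (σ • 1 - Matrix.diagonal τs)) *ᵥ f =
        θ • (H.submatrix Fin.castSucc id *ᵥ f)) :
    (((K + σ • M) * M⁻¹) *ᵥ (V *ᵥ (H *ᵥ f)) - θ • (V *ᵥ (H *ᵥ f)) =
        -(H (Fin.last (m + 1)) (Fin.last m) * (τs (Fin.last m) + θ - σ) *
            f (Fin.last m)) • fun i => V i (Fin.last (m + 1))) ∧
      (V.submatrix id Fin.castSucc)ᴴ *ᵥ
          (((K + σ • M) * M⁻¹) *ᵥ (V *ᵥ (H *ᵥ f)) - θ • (V *ᵥ (H *ᵥ f))) = 0 := by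
  have hMdet : IsUnit M.det := (isUnit_iff_isUnit_det M).mp hM
  have hMinv : M⁻¹ * M = 1 := nonsing_inv_mul M hMdet
  set c : ℂ := -(H (Fin.last (m + 1)) (Fin.last m) * (τs (Fin.last m) + θ - σ) *
      f (Fin.last m)) with hc
  -- u = V H f = M Z f
  have hVHf : V *ᵥ (H *ᵥ f) = M *ᵥ (Z *ᵥ f) := by
    rw [mulVec_mulVec, mulVec_mulVec, h1]
  have hKZ : K * Z = V.submatrix id Fin.castSucc - M * Z * Matrix.diagonal τs := by
    rw [← h2]; exact (add_sub_cancel_right _ _).symm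
  have eM : (K + σ • M) * Z = V.submatrix id Fin.castSucc
      + (V * H) * ((σ • 1 : Matrix (Fin (m+1)) (Fin (m+1)) ℂ) - Matrix.diagonal τs) := by
    rw [Matrix.add_mul, hKZ, ← h1, Matrix.mul_sub, Matrix.mul_smul, Matrix.mul_one, Matrix.smul_mul]
    abel
  -- the key vector identity
  have key : ((K + σ • M) * M⁻¹) *ᵥ (V *ᵥ (H *ᵥ f)) - θ • (V *ᵥ (H *ᵥ f)) =
      c • fun i => V i (Fin.last (m + 1)) := by
    have step1 : ((K + σ • M) * M⁻¹) *ᵥ (V *ᵥ (H *ᵥ f)) = (K + σ • M) *ᵥ (Z *ᵥ f) := by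
      have hcanc : M⁻¹ *ᵥ (M *ᵥ (Z *ᵥ f)) = Z *ᵥ f := by
        rw [mulVec_mulVec, hMinv, one_mulVec]
      rw [hVHf, ← mulVec_mulVec, hcanc]
    have step2 : (K + σ • M) *ᵥ (Z *ᵥ f) = V.submatrix id Fin.castSucc *ᵥ f
        + V *ᵥ (H *ᵥ (((σ • 1 : Matrix (Fin (m+1)) (Fin (m+1)) ℂ)
            - Matrix.diagonal τs) *ᵥ f)) := by
      simp only [mulVec_mulVec]
      rw [eM, add_mulVec, Matrix.mul_assoc]
    have hVm : (V.submatrix id Fin.castSucc) *ᵥ f = V *ᵥ (Fin.snoc f 0) := by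
      ext i
      simp [mulVec, dotProduct, Fin.sum_univ_castSucc]
    rw [step1, step2, hVm, ← mulVec_add, ← mulVec_smul, ← mulVec_sub]
    have hin : (Fin.snoc f 0 : Fin (m+2) → ℂ)
        + H *ᵥ (((σ • 1 : Matrix (Fin (m+1)) (Fin (m+1)) ℂ) - Matrix.diagonal τs) *ᵥ f)
        - θ • (H *ᵥ f) = Pi.single (Fin.last (m + 1)) c := by
      funext j
      refine Fin.lastCases ?_ ?_ j
      · -- last row
        have hsum : ∀ y : Fin (m+1) → ℂ,
            (H *ᵥ y) (Fin.last (m + 1)) = H (Fin.last (m+1)) (Fin.last m) * y (Fin.last m) := by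
          intro y
          simp only [mulVec, dotProduct]
          exact Finset.sum_eq_single _ (fun b _ hb => by rw [hH b hb, zero_mul])
            (fun h => absurd (Finset.mem_univ _) h)
        simp only [Pi.add_apply, Pi.sub_apply, Pi.smul_apply, Fin.snoc_last, hsum,
          Pi.single_eq_same, smul_eq_mul]
        have : (((σ • 1 : Matrix (Fin (m+1)) (Fin (m+1)) ℂ) - Matrix.diagonal τs) *ᵥ f)
            (Fin.last m) = (σ - τs (Fin.last m)) * f (Fin.last m) := by
          simp [sub_mulVec, smul_mulVec, one_mulVec, mulVec_diagonal, sub_mul]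
        rw [this, hc]
        ring
      · intro i
        have hrow : ∀ y : Fin (m+1) → ℂ,
            (H *ᵥ y) (Fin.castSucc i) = (H.submatrix Fin.castSucc id *ᵥ y) i := by
          intro y; simp [mulVec, dotProduct]
        have he := congrFun heig i
        simp only [add_mulVec, one_mulVec, ← mulVec_mulVec, Pi.add_apply, Pi.smul_apply,
          smul_eq_mul] at he
        simp only [Pi.add_apply, Pi.sub_apply, Pi.smul_apply, Fin.snoc_castSucc, hrow,
          smul_eq_mul]
        rw [Pi.single_eq_of_ne (Fin.castSucc_lt_last i).ne]
        rw [← he]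
        ring
    rw [hin]
    funext i
    simp [mulVec, dotProduct, Pi.single_apply, mul_comm]
  refine ⟨key, ?_⟩
  rw [key]
  funext j
  have hentry := congrFun (congrFun hV (Fin.castSucc j)) (Fin.last (m + 1))
  simp only [mul_apply, conjTranspose_apply, one_apply,
    (Fin.castSucc_lt_last j).ne, if_false] at hentry
  simp only [mulVec, dotProduct, Pi.smul_apply, smul_eq_mul, conjTranspose_apply,
    submatrix_apply, id]
  have hfac : ∀ x : Fin n, star (V x (Fin.castSucc j)) * (c * V x (Fin.last (m + 1)))
      = c * (star (V x (Fin.castSucc j)) * V x (Fin.last (m + 1))) := fun x => by ring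
  simp only [hfac, ← Finset.mul_sum, hentry, mul_zero, Pi.zero_apply]
end

section
/- Assume the flexible Arnoldi relations M Z_m = V_{m+1} H̄_m and K Z_m + M Z_m T_m = V_m hold with V_{m+1} having orthonormal columns, and that H_m(σ; T_m) is invertible. Let the flexible FOM solution be y_m = H_m(σ; T_m)^{-1} β e_1 for β > 0, x_m = Z_m y_m, and r_m(σ) = β v_1 − (K + σM) x_m where v_1 is the first column of V_{m+1}. Then r_m(σ) = −(σ − τ_m) h_{m+1,m} (e_m^* H_m(σ; T_m)^{-1} β e_1) v_{m+1}; in particular ‖r_m(σ)‖₂ = |σ − τ_m| · |h_{m+1,m}| · |e_m^* H_m(σ; T_m)^{-1} β e_1|. -/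
/-!
Combining the two Arnoldi relations gives
`(K + σM) Z_m = V_{m+1} [H_m(σ; T_m); h_{m+1,m} (σ - τ_m) e_mᵀ]`, because the last row of `H̄_m`
is `h_{m+1,m} e_mᵀ`. Applied to `y_m`, the top block returns `β e_1`, which cancels `β v_1`;
what is left of the residual is the unit vector `v_{m+1}` scaled by `h_{m+1,m} (σ - τ_m) (y_m)_m`.
-/

open Matrix

noncomputable def norm2 {n : ℕ} (x : Fin n → ℂ) : ℝ :=
  ‖(WithLp.equiv 2 (Fin n → ℂ)).symm x‖

section Snoc

variable {ι R : Type*} [NonUnitalNonAssocSemiring R]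

theorem Matrix.mulVec_snoc {k : ℕ} (A : Matrix ι (Fin (k + 1)) R) (u : Fin k → R) (a : R) :
    A *ᵥ Fin.snoc (α := fun _ => R) u a =
      A.submatrix id Fin.castSucc *ᵥ u + fun i => A i (Fin.last k) * a := by
  ext i
  simp [mulVec, dotProduct, Fin.sum_univ_castSucc]

theorem Matrix.mulVec_eq_snoc [Fintype ι] {k : ℕ} (H : Matrix (Fin (k + 1)) ι R) (s : ι → R) :
    H *ᵥ s =
      Fin.snoc (α := fun _ => R) (H.submatrix Fin.castSucc id *ᵥ s) (H (Fin.last k) ⬝ᵥ s) := by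
  ext i
  refine Fin.lastCases ?_ (fun i => ?_) i <;> simp [mulVec]

theorem dotProduct_eq_mul_of_forall_ne [Fintype ι] [DecidableEq ι] {u : ι → R} {j : ι}
    (hu : ∀ i, i ≠ j → u i = 0) (v : ι → R) : u ⬝ᵥ v = u j * v j :=
  Fintype.sum_eq_single j fun i hi => by rw [hu i hi, zero_mul]

end Snoc

theorem norm2_smul {n : ℕ} (c : ℂ) (x : Fin n → ℂ) : norm2 (c • x) = ‖c‖ * norm2 x :=
  norm_smul c _

theorem norm2_col_eq_one {n k : ℕ} {V : Matrix (Fin n) (Fin k) ℂ} (hV : Vᴴ * V = 1) (j : Fin k) :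
    norm2 (fun i => V i j) = 1 := by
  have hcol : star (fun i => V i j) ⬝ᵥ (fun i => V i j) = 1 := by
    rw [← one_apply_eq j, ← hV]; rfl
  refine (pow_eq_one_iff_of_nonneg (norm_nonneg _) two_ne_zero).mp ?_
  rw [@norm_sq_eq_re_inner ℂ, WithLp.equiv_symm_apply, EuclideanSpace.inner_toLp_toLp,
    dotProduct_comm, hcol, RCLike.one_re]

section FlexibleArnoldi

variable {ι R : Type*} [Fintype ι] [CommRing R] {m : ℕ}
  {K M : Matrix ι ι R} {Z : Matrix ι (Fin (m + 1)) R} {V : Matrix ι (Fin (m + 2)) R}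
  {H : Matrix (Fin (m + 2)) (Fin (m + 1)) R} {τs : Fin (m + 1) → R}

theorem shifted_arnoldi_relation (h1 : M * Z = V * H)
    (h2 : K * Z + M * Z * diagonal τs = V.submatrix id Fin.castSucc) (σ : R) :
    (K + σ • M) * Z = V.submatrix id Fin.castSucc + V * H * (σ • 1 - diagonal τs) := by
  rw [← h2, ← h1, Matrix.mul_sub, Matrix.mul_smul, Matrix.mul_one, Matrix.add_mul, Matrix.smul_mul]
  abel

theorem shifted_arnoldi_mulVec (h1 : M * Z = V * H)
    (h2 : K * Z + M * Z * diagonal τs = V.submatrix id Fin.castSucc)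
    (hH : ∀ j, j ≠ Fin.last m → H (Fin.last (m + 1)) j = 0) (σ : R) (y : Fin (m + 1) → R) :
    (K + σ • M) *ᵥ (Z *ᵥ y) =
      V *ᵥ Fin.snoc (α := fun _ => R)
        ((1 + H.submatrix Fin.castSucc id * (σ • 1 - diagonal τs)) *ᵥ y)
        (H (Fin.last (m + 1)) (Fin.last m) * ((σ - τs (Fin.last m)) * y (Fin.last m))) := by
  set s := (σ • 1 - diagonal τs) *ᵥ y with hs
  have hs_last : s (Fin.last m) = (σ - τs (Fin.last m)) * y (Fin.last m) := by
    simp [hs, sub_mulVec, smul_mulVec, mulVec_diagonal, sub_mul]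
  rw [mulVec_mulVec, shifted_arnoldi_relation h1 h2, add_mulVec, ← mulVec_mulVec, ← mulVec_mulVec,
    ← hs, mulVec_eq_snoc H s, dotProduct_eq_mul_of_forall_ne hH, hs_last, mulVec_snoc, mulVec_snoc,
    add_mulVec, one_mulVec, ← mulVec_mulVec, mulVec_add, ← hs]
  abel

end FlexibleArnoldi

theorem stmt8_general {n m : ℕ} (K M : Matrix (Fin n) (Fin n) ℂ)
    (Z : Matrix (Fin n) (Fin (m + 1)) ℂ) (V : Matrix (Fin n) (Fin (m + 2)) ℂ)
    (hV : Vᴴ * V = 1)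
    (H : Matrix (Fin (m + 2)) (Fin (m + 1)) ℂ) (τs : Fin (m + 1) → ℂ)
    (σ : ℂ) (β : ℝ)
    (h1 : M * Z = V * H)
    (h2 : K * Z + M * Z * Matrix.diagonal τs = V.submatrix id Fin.castSucc)
    (hH : ∀ j : Fin (m + 1), j ≠ Fin.last m → H (Fin.last (m + 1)) j = 0)
    (Hσ : Matrix (Fin (m + 1)) (Fin (m + 1)) ℂ)
    (hHσ : Hσ = 1 + H.submatrix Fin.castSucc id * (σ • 1 - Matrix.diagonal τs))
    (hinv : IsUnit Hσ)
    (y : Fin (m + 1) → ℂ)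
    (hy : y = Hσ⁻¹ *ᵥ ((β : ℂ) • (Pi.single 0 1 : Fin (m + 1) → ℂ))) :
    ((β : ℂ) • (fun i => V i 0) - (K + σ • M) *ᵥ (Z *ᵥ y) =
        -((σ - τs (Fin.last m)) * H (Fin.last (m + 1)) (Fin.last m) *
            y (Fin.last m)) • fun i => V i (Fin.last (m + 1))) ∧
      norm2 ((β : ℂ) • (fun i => V i 0) - (K + σ • M) *ᵥ (Z *ᵥ y)) =
        ‖σ - τs (Fin.last m)‖ *
          ‖H (Fin.last (m + 1)) (Fin.last m)‖ *
          ‖y (Fin.last m)‖ := by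
  have hHy : Hσ *ᵥ y = (β : ℂ) • Pi.single 0 1 := by
    rw [hy, mulVec_mulVec, mul_nonsing_inv _ ((isUnit_iff_isUnit_det _).mp hinv), one_mulVec]
  have hres : (β : ℂ) • (fun i => V i 0) - (K + σ • M) *ᵥ (Z *ᵥ y) =
      -((σ - τs (Fin.last m)) * H (Fin.last (m + 1)) (Fin.last m) * y (Fin.last m)) •
        fun i => V i (Fin.last (m + 1)) := by
    rw [shifted_arnoldi_mulVec h1 h2 hH, ← hHσ, hHy, mulVec_snoc, mulVec_smul, mulVec_single_one]
    ext i
    simp only [Pi.sub_apply, Pi.add_apply, Pi.smul_apply, smul_eq_mul, col_apply, submatrix_apply,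
      id_eq, Fin.castSucc_zero]
    ring
  refine ⟨hres, ?_⟩
  rw [hres, norm2_smul, norm2_col_eq_one hV, mul_one, norm_neg, norm_mul, norm_mul]

theorem stmt8 {n m : ℕ} (K M : Matrix (Fin n) (Fin n) ℂ)
    (Z : Matrix (Fin n) (Fin (m + 1)) ℂ) (V : Matrix (Fin n) (Fin (m + 2)) ℂ)
    (hV : Vᴴ * V = 1)
    (H : Matrix (Fin (m + 2)) (Fin (m + 1)) ℂ) (τs : Fin (m + 1) → ℂ)
    (σ : ℂ) (β : ℝ) (hβ : 0 < β)
    (h1 : M * Z = V * H)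
    (h2 : K * Z + M * Z * Matrix.diagonal τs = V.submatrix id Fin.castSucc)
    (hH : ∀ j : Fin (m + 1), j ≠ Fin.last m → H (Fin.last (m + 1)) j = 0)
    (Hσ : Matrix (Fin (m + 1)) (Fin (m + 1)) ℂ)
    (hHσ : Hσ = 1 + H.submatrix Fin.castSucc id * (σ • 1 - Matrix.diagonal τs))
    (hinv : IsUnit Hσ)
    (y : Fin (m + 1) → ℂ)
    (hy : y = Hσ⁻¹ *ᵥ ((β : ℂ) • (Pi.single 0 1 : Fin (m + 1) → ℂ))) :
    ((β : ℂ) • (fun i => V i 0) - (K + σ • M) *ᵥ (Z *ᵥ y) =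
        -((σ - τs (Fin.last m)) * H (Fin.last (m + 1)) (Fin.last m) *
            y (Fin.last m)) • fun i => V i (Fin.last (m + 1))) ∧
      norm2 ((β : ℂ) • (fun i => V i 0) - (K + σ • M) *ᵥ (Z *ᵥ y)) =
        ‖σ - τs (Fin.last m)‖ *
          ‖H (Fin.last (m + 1)) (Fin.last m)‖ *
          ‖y (Fin.last m)‖ :=
  stmt8_general K M Z V hV H τs σ β h1 h2 hH Hσ hHσ hinv y hy
end

section
/- Under the hypotheses of the flexible FOM residual formula, suppose further that H_m(σ; T_m) admits a generalized eigendecomposition H_m(σ; T_m) = H_m F Θ F^{-1} with F invertible and Θ = diag(θ_1,...,θ_m), with all θ_k ≠ 0 and τ_m + θ_k − σ ≠ 0. Then the flexible FOM residual satisfies ‖r_m(σ)‖₂ ≤ Σ_{k=1}^m ρ_k · |(σ − τ_m)/(θ_k + τ_m − σ)| · |θ_k|^{-1} · |s_k|, where s_k = e_k^* F^{-1} H_m^{-1} β e_1 and ρ_k = |h_{m+1,m}| · |τ_m + θ_k − σ| · |e_m^* f_k| with f_k the k-th column of F. -/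
/-!
The Arnoldi relations give `(K + σM) Z_m = V_m + V_{m+1} H̄_m (σI - T_m)`, and the first `m` rows
of `H̄_m (σI - T_m) y` are `H_m(σ; T_m) y - y = βe₁ - y`. So the residual collapses to the multiple
`-h_{m+1,m} (σ - τ_m) (e_m^* y)` of the unit vector `v_{m+1}`. Expanding `y = F Θ⁻¹ s` through the
eigendecomposition and applying the triangle inequality to `e_m^* y = Σ_k (e_m^* f_k) θ_k⁻¹ s_k`
gives the bound, with `ρ_k = |h_{m+1,m}| |τ_m + θ_k - σ| |e_m^* f_k|`.
-/

open Matrix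

theorem norm2_smul_col {n : ℕ} {ι : Type*} [Fintype ι] (V : Matrix (Fin n) ι ℂ) {j : ι}
    (hV : (Vᴴ * V) j j = 1) (c : ℂ) : norm2 (c • V.col j) = ‖c‖ := by
  have hcol : ‖WithLp.toLp 2 (V.col j)‖ = 1 := by
    have h := inner_self_eq_norm_sq_to_K (𝕜 := ℂ) (WithLp.toLp 2 (V.col j))
    have hdot : star (V.col j) ⬝ᵥ V.col j = 1 := hV
    rw [EuclideanSpace.inner_toLp_toLp, dotProduct_comm, hdot] at h
    have : ‖WithLp.toLp 2 (V.col j)‖ ^ 2 = 1 :=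
      Complex.ofReal_eq_one.mp (by push_cast; exact h.symm)
    exact (pow_eq_one_iff_of_nonneg (norm_nonneg _) two_ne_zero).mp this
  simp [norm2, norm_smul, hcol]

section
variable {R : Type*} [CommRing R]

theorem mulVec_eq_mulVec_castSucc_add_smul_last {ι : Type*} {k : ℕ}
    (V : Matrix ι (Fin (k + 1)) R) (w : Fin (k + 1) → R) :
    V *ᵥ w = V.submatrix id Fin.castSucc *ᵥ (fun j => w j.castSucc) +
      w (Fin.last k) • V.col (Fin.last k) := by
  ext i
  simp [mulVec, dotProduct, Fin.sum_univ_castSucc, mul_comm]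

theorem add_smul_mul_eq_of_flexible_arnoldi {ι κ μ : Type*} [Fintype ι] [Fintype κ] [Fintype μ]
    [DecidableEq κ] {K M : Matrix ι ι R} {Z W : Matrix ι κ R} {V : Matrix ι μ R}
    {H : Matrix μ κ R} {τ : κ → R} (σ : R) (h1 : M * Z = V * H)
    (h2 : K * Z + M * Z * diagonal τ = W) :
    (K + σ • M) * Z = W + V * (H * diagonal fun j => σ - τ j) := by
  have hD : (diagonal fun j => σ - τ j) = σ • 1 - diagonal τ := by
    rw [smul_one_eq_diagonal, diagonal_sub]
  rw [← h2, hD, ← Matrix.mul_assoc, ← h1, Matrix.mul_sub, Matrix.mul_smul, Matrix.mul_one,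
    Matrix.add_mul, Matrix.smul_mul]
  abel

theorem flexible_residual_eq_smul_last_col {n m : ℕ} {K M : Matrix (Fin n) (Fin n) R}
    {Z : Matrix (Fin n) (Fin (m + 1)) R} {V : Matrix (Fin n) (Fin (m + 2)) R}
    {H : Matrix (Fin (m + 2)) (Fin (m + 1)) R} {τ : Fin (m + 1) → R} {σ : R}
    {b y : Fin (m + 1) → R} (h1 : M * Z = V * H)
    (h2 : K * Z + M * Z * diagonal τ = V.submatrix id Fin.castSucc)
    (hH : ∀ j, j ≠ Fin.last m → H (Fin.last (m + 1)) j = 0)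
    (hy : (1 + H.submatrix Fin.castSucc id * diagonal (fun j => σ - τ j)) *ᵥ y = b) :
    V.submatrix id Fin.castSucc *ᵥ b - (K + σ • M) *ᵥ (Z *ᵥ y) =
      -(H (Fin.last (m + 1)) (Fin.last m) * (σ - τ (Fin.last m)) * y (Fin.last m)) •
        V.col (Fin.last (m + 1)) := by
  set D := diagonal fun j => σ - τ j
  have hupper : (fun j => ((H * D) *ᵥ y) j.castSucc) = b - y := by
    rw [← hy, add_mulVec, one_mulVec, add_sub_cancel_left]
    rfl
  have hlast : ((H * D) *ᵥ y) (Fin.last (m + 1)) =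
      H (Fin.last (m + 1)) (Fin.last m) * (σ - τ (Fin.last m)) * y (Fin.last m) := by
    rw [mulVec, dotProduct, Finset.sum_eq_single (Fin.last m)] <;> simp_all [D, mul_diagonal]
  rw [mulVec_mulVec, add_smul_mul_eq_of_flexible_arnoldi σ h1 h2, add_mulVec, ← mulVec_mulVec,
    mulVec_eq_mulVec_castSucc_add_smul_last V, hupper, hlast, mulVec_sub, neg_smul]
  abel

end

theorem inv_diagonal_of_ne_zero {K ι : Type*} [Field K] [Fintype ι] [DecidableEq ι] {θ : ι → K}
    (hθ : ∀ k, θ k ≠ 0) : (diagonal θ)⁻¹ = diagonal θ⁻¹ :=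
  inv_eq_right_inv <| by simp [diagonal_mul_diagonal, hθ]

theorem inv_mul_mul_diagonal_mul_inv {K ι : Type*} [Field K] [Fintype ι] [DecidableEq ι]
    (A : Matrix ι ι K) {F : Matrix ι ι K} {θ : ι → K} (hF : IsUnit F) (hθ : ∀ k, θ k ≠ 0) :
    (A * F * diagonal θ * F⁻¹)⁻¹ = F * diagonal θ⁻¹ * F⁻¹ * A⁻¹ := by
  rw [Matrix.mul_inv_rev, Matrix.mul_inv_rev, Matrix.mul_inv_rev, inv_diagonal_of_ne_zero hθ,
    nonsing_inv_nonsing_inv F ((isUnit_iff_isUnit_det F).mp hF)]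
  simp only [Matrix.mul_assoc]

theorem stmt9_general {n m : ℕ} (K M : Matrix (Fin n) (Fin n) ℂ)
    (Z : Matrix (Fin n) (Fin (m + 1)) ℂ) (V : Matrix (Fin n) (Fin (m + 2)) ℂ)
    (hV : Vᴴ * V = 1)
    (H : Matrix (Fin (m + 2)) (Fin (m + 1)) ℂ) (τs : Fin (m + 1) → ℂ)
    (σ : ℂ) (β : ℝ)
    (h1 : M * Z = V * H)
    (h2 : K * Z + M * Z * Matrix.diagonal τs = V.submatrix id Fin.castSucc)
    (hH : ∀ j : Fin (m + 1), j ≠ Fin.last m → H (Fin.last (m + 1)) j = 0)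
    (Hσ : Matrix (Fin (m + 1)) (Fin (m + 1)) ℂ)
    (hHσ : Hσ = 1 + H.submatrix Fin.castSucc id * (σ • 1 - Matrix.diagonal τs))
    (hinv : IsUnit Hσ)
    (F : Matrix (Fin (m + 1)) (Fin (m + 1)) ℂ) (hF : IsUnit F)
    (θ : Fin (m + 1) → ℂ) (hθ : ∀ k, θ k ≠ 0)
    (hτθ : ∀ k, τs (Fin.last m) + θ k - σ ≠ 0)
    (hdecomp : Hσ = H.submatrix Fin.castSucc id * F * Matrix.diagonal θ * F⁻¹)
    (y : Fin (m + 1) → ℂ)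
    (hy : y = Hσ⁻¹ *ᵥ ((β : ℂ) • (Pi.single 0 1 : Fin (m + 1) → ℂ))) :
    norm2 ((β : ℂ) • (fun i => V i 0) - (K + σ • M) *ᵥ (Z *ᵥ y)) ≤
      ∑ k : Fin (m + 1),
        (‖H (Fin.last (m + 1)) (Fin.last m)‖ *
            ‖τs (Fin.last m) + θ k - σ‖ *
            ‖F (Fin.last m) k‖) *
          ‖(σ - τs (Fin.last m)) / (θ k + τs (Fin.last m) - σ)‖ *
          (‖θ k‖)⁻¹ *
          ‖
            ((F⁻¹ *ᵥ ((H.submatrix Fin.castSucc id)⁻¹ *ᵥ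
              ((β : ℂ) • (Pi.single 0 1 : Fin (m + 1) → ℂ)))) k)‖ := by
  set b : Fin (m + 1) → ℂ := (β : ℂ) • Pi.single 0 1
  set s := F⁻¹ *ᵥ ((H.submatrix Fin.castSucc id)⁻¹ *ᵥ b)
  have hb : (β : ℂ) • (fun i => V i 0) = V.submatrix id Fin.castSucc *ᵥ b := by
    rw [mulVec_smul, mulVec_single_one]
    rfl
  have hHσy : Hσ *ᵥ y = b := by
    rw [hy, mulVec_mulVec, mul_nonsing_inv _ ((isUnit_iff_isUnit_det _).mp hinv), one_mulVec]
  have hylast : y (Fin.last m) = ∑ k, F (Fin.last m) k * ((θ k)⁻¹ * s k) := by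
    rw [hy, hdecomp, inv_mul_mul_diagonal_mul_inv _ hF hθ, ← mulVec_mulVec, ← mulVec_mulVec,
      ← mulVec_mulVec, show diagonal θ⁻¹ *ᵥ s = θ⁻¹ * s from funext (mulVec_diagonal _ _)]
    rfl
  rw [smul_one_eq_diagonal, diagonal_sub] at hHσ
  rw [hb, flexible_residual_eq_smul_last_col h1 h2 hH (hHσ ▸ hHσy),
    norm2_smul_col V (by rw [hV, one_apply_eq]), hylast, norm_neg, Finset.mul_sum]
  refine (norm_sum_le _ _).trans_eq (Finset.sum_congr rfl fun k _ => ?_)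
  have hz : ‖θ k + τs (Fin.last m) - σ‖ ≠ 0 := by
    rw [add_comm (θ k)]; exact norm_ne_zero_iff.mpr (hτθ k)
  rw [add_comm (τs _), norm_div]
  simp only [norm_mul, norm_inv]
  field_simp

theorem stmt9 {n m : ℕ} (K M : Matrix (Fin n) (Fin n) ℂ)
    (Z : Matrix (Fin n) (Fin (m + 1)) ℂ) (V : Matrix (Fin n) (Fin (m + 2)) ℂ)
    (hV : Vᴴ * V = 1)
    (H : Matrix (Fin (m + 2)) (Fin (m + 1)) ℂ) (τs : Fin (m + 1) → ℂ)
    (σ : ℂ) (β : ℝ) (hβ : 0 < β)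
    (h1 : M * Z = V * H)
    (h2 : K * Z + M * Z * Matrix.diagonal τs = V.submatrix id Fin.castSucc)
    (hH : ∀ j : Fin (m + 1), j ≠ Fin.last m → H (Fin.last (m + 1)) j = 0)
    (Hσ : Matrix (Fin (m + 1)) (Fin (m + 1)) ℂ)
    (hHσ : Hσ = 1 + H.submatrix Fin.castSucc id * (σ • 1 - Matrix.diagonal τs))
    (hinv : IsUnit Hσ)
    (hHm : IsUnit (H.submatrix Fin.castSucc id))
    (F : Matrix (Fin (m + 1)) (Fin (m + 1)) ℂ) (hF : IsUnit F)
    (θ : Fin (m + 1) → ℂ) (hθ : ∀ k, θ k ≠ 0)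
    (hτθ : ∀ k, τs (Fin.last m) + θ k - σ ≠ 0)
    (hdecomp : Hσ = H.submatrix Fin.castSucc id * F * Matrix.diagonal θ * F⁻¹)
    (y : Fin (m + 1) → ℂ)
    (hy : y = Hσ⁻¹ *ᵥ ((β : ℂ) • (Pi.single 0 1 : Fin (m + 1) → ℂ))) :
    norm2 ((β : ℂ) • (fun i => V i 0) - (K + σ • M) *ᵥ (Z *ᵥ y)) ≤
      ∑ k : Fin (m + 1),
        (‖H (Fin.last (m + 1)) (Fin.last m)‖ *
            ‖τs (Fin.last m) + θ k - σ‖ *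
            ‖F (Fin.last m) k‖) *
          ‖(σ - τs (Fin.last m)) / (θ k + τs (Fin.last m) - σ)‖ *
          (‖θ k‖)⁻¹ *
          ‖
            ((F⁻¹ *ᵥ ((H.submatrix Fin.castSucc id)⁻¹ *ᵥ
              ((β : ℂ) • (Pi.single 0 1 : Fin (m + 1) → ℂ)))) k)‖ :=
  stmt9_general K M Z V hV H τs σ β h1 h2 hH Hσ hHσ hinv F hF θ hθ hτθ hdecomp y hy
end

section
/- Let H̄ ∈ ℂ^{(m+1)×m} have top m×m block H (invertible) and last row η e_m^* for some η ∈ ℂ. Then the normal equations H̄* H̄ y = H̄* β e_1 for the least squares problem min_y ‖β e_1 − H̄ y‖₂ are equivalent to (H + η̄η H^{-*} e_m e_m^*) y = β e_1, i.e., the GMRES subproblem solution is that of a rank-one perturbation of the FOM subproblem matrix H. -/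
open Matrix

theorem stmt10 {m : ℕ} (H : Matrix (Fin (m + 1)) (Fin (m + 1)) ℂ)
    (hH : IsUnit H) (η β : ℂ)
    (Hb : Matrix (Fin (m + 2)) (Fin (m + 1)) ℂ)
    (hTop : Hb.submatrix Fin.castSucc id = H)
    (hBot : ∀ j, Hb (Fin.last (m + 1)) j = η * (Pi.single (Fin.last m) (1 : ℂ) : Fin (m + 1) → ℂ) j)
    (y : Fin (m + 1) → ℂ) :
    (Hbᴴ * Hb) *ᵥ y = Hbᴴ *ᵥ (β • (Pi.single 0 1 : Fin (m + 2) → ℂ)) ↔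
      (H + (starRingEnd ℂ η * η) •
          ((Hᴴ)⁻¹ *
            Matrix.vecMulVec ((Pi.single (Fin.last m) 1 : Fin (m + 1) → ℂ))
              ((Pi.single (Fin.last m) 1 : Fin (m + 1) → ℂ)))) *ᵥ y = β • (Pi.single 0 1 : Fin (m + 1) → ℂ) := by
  set e : Fin (m + 1) → ℂ := (Pi.single (Fin.last m) 1 : Fin (m + 1) → ℂ) with he
  set c : ℂ := starRingEnd ℂ η * η with hc
  have hHU : IsUnit Hᴴ := by
    rw [Matrix.isUnit_iff_isUnit_det, Matrix.det_conjTranspose]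
    exact ((Matrix.isUnit_iff_isUnit_det H).mp hH).star
  have hHdet : IsUnit Hᴴ.det := (Matrix.isUnit_iff_isUnit_det _).mp hHU
  -- Key matrix identity: Hbᴴ * Hb = Hᴴ * H + c • vecMulVec e e
  have hA : Hbᴴ * Hb = Hᴴ * H + c • Matrix.vecMulVec e e := by
    ext i j
    simp only [Matrix.mul_apply, Matrix.conjTranspose_apply, Matrix.add_apply,
      Matrix.smul_apply, Matrix.vecMulVec_apply, smul_eq_mul]
    rw [Fin.sum_univ_castSucc]
    congr 1
    · apply Finset.sum_congr rfl
      intro k _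
      have h1 : Hb k.castSucc i = H k i := by rw [← hTop]; rfl
      have h2 : Hb k.castSucc j = H k j := by rw [← hTop]; rfl
      rw [h1, h2]
    · rw [hBot i, hBot j, star_mul']
      have hse : star (e i) = e i := by
        by_cases hi : i = Fin.last m <;> simp [he, Pi.single_apply, hi]
      rw [hse, hc]; simp only [starRingEnd_apply]; ring
  -- Key vector identity: Hbᴴ *ᵥ (β • e₁) = Hᴴ *ᵥ (β • e₁)
  have hB : Hbᴴ *ᵥ (β • (Pi.single 0 1 : Fin (m + 2) → ℂ)) =
      Hᴴ *ᵥ (β • (Pi.single 0 1 : Fin (m + 1) → ℂ)) := by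
    ext i
    simp only [Matrix.mulVec, Matrix.conjTranspose_apply, dotProduct, Pi.smul_apply,
      smul_eq_mul]
    rw [Finset.sum_eq_single (0 : Fin (m + 2)) (by
        intro b _ hb
        simp [Pi.single_apply, hb])
      (by intro h; exact absurd (Finset.mem_univ _) h)]
    rw [Finset.sum_eq_single (0 : Fin (m + 1)) (by
        intro b _ hb
        simp [Pi.single_apply, hb])
      (by intro h; exact absurd (Finset.mem_univ _) h)]
    have h0 : Hb 0 i = H 0 i := by
      rw [← hTop]
      have : (0 : Fin (m + 2)) = Fin.castSucc 0 := rfl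
      rw [this]; rfl
    simp [h0]
  -- Product identity
  have hprod : Hᴴ * (H + c • ((Hᴴ)⁻¹ * Matrix.vecMulVec e e)) =
      Hᴴ * H + c • Matrix.vecMulVec e e := by
    rw [Matrix.mul_add, Matrix.mul_smul, ← Matrix.mul_assoc,
      Matrix.mul_nonsing_inv _ hHdet, Matrix.one_mul]
  rw [hA, hB]
  have hinj : Function.Injective (Hᴴ.mulVec) := by
    have := hHU.invertible
    exact Matrix.mulVec_injective_of_invertible Hᴴ
  constructor
  · intro h
    apply hinj
    rw [Matrix.mulVec_mulVec, hprod, h]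
  · intro h
    have := congrArg (Hᴴ.mulVec) h
    rwa [Matrix.mulVec_mulVec, hprod] at this
end

section
/- Let H ∈ ℂ^{m×m} be invertible, η ∈ ℂ, and define y^fom = H^{-1} β e_1 and y^gmres as the minimizer of ‖β e_1 − H̄ y‖₂ where H̄ = [H; η e_m^*] ∈ ℂ^{(m+1)×m}. Then y^gmres = y^fom − H^{-1} (η̄ H^{-*} e_m) · (η e_m^* y^fom) / (1 + ‖η H^{-*} e_m‖₂²). -/
open Matrix

theorem mulVec_eq_of_forall_norm_residual_le {𝕜 ι κ : Type*} [RCLike 𝕜] [Fintype ι] [Fintype κ]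
    {A : Matrix ι κ 𝕜} {b : ι → 𝕜} {x y : κ → 𝕜}
    (hx : ∀ z, ‖WithLp.toLp 2 (b - A *ᵥ x)‖ ≤ ‖WithLp.toLp 2 (b - A *ᵥ z)‖)
    (hy : Aᴴ *ᵥ (b - A *ᵥ y) = 0) : A *ᵥ x = A *ᵥ y := by
  set r : EuclideanSpace 𝕜 ι := WithLp.toLp 2 (b - A *ᵥ y)
  set t : EuclideanSpace 𝕜 ι := WithLp.toLp 2 (A *ᵥ (x - y))
  have horth : inner 𝕜 r t = 0 := by
    have h : star (b - A *ᵥ y) ᵥ* A = 0 := by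
      simpa [star_mulVec] using congrArg star hy
    rw [EuclideanSpace.inner_toLp_toLp, dotProduct_comm, dotProduct_mulVec, h, zero_dotProduct]
  have hpyth : ‖r - t‖ ^ 2 = ‖r‖ ^ 2 + ‖t‖ ^ 2 := by
    rw [@norm_sub_sq 𝕜, horth]; simp
  have hle : ‖r - t‖ ≤ ‖r‖ := by
    simpa [r, t, mulVec_sub, ← WithLp.toLp_sub] using hx y
  have ht : t = 0 := by
    rw [← norm_eq_zero]; nlinarith [norm_nonneg t, norm_nonneg (r - t)]
  rw [← sub_eq_zero, ← mulVec_sub]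
  simpa [t] using ht

theorem mulVec_injective_of_submatrix {R m m' n : Type*} [Semiring R] [Fintype n]
    {A : Matrix m n R} (f : m' → m) (h : Function.Injective (A.submatrix f id).mulVec) :
    Function.Injective A.mulVec := fun _ _ hxy => h <| funext fun i => congrFun hxy (f i)

theorem conjTranspose_mulVec_eq_castSucc_add_last {R ι : Type*} [CommSemiring R] [StarRing R]
    [Fintype ι] {n : ℕ} (A : Matrix (Fin (n + 1)) ι R) (v : Fin (n + 1) → R) :
    Aᴴ *ᵥ v = (A.submatrix Fin.castSucc id)ᴴ *ᵥ (fun i => v i.castSucc) +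
      v (Fin.last n) • star (A (Fin.last n)) := by
  ext j; simp [mulVec, dotProduct, Fin.sum_univ_castSucc, mul_comm]

theorem mulVec_nonsing_inv_mulVec {R n : Type*} [CommRing R] [Fintype n] [DecidableEq n]
    {A : Matrix n n R} (hA : IsUnit A) (v : n → R) : A *ᵥ (A⁻¹ *ᵥ v) = v := by
  rw [mulVec_mulVec, mul_nonsing_inv A ((isUnit_iff_isUnit_det A).mp hA), one_mulVec]

theorem apply_eq_star_dotProduct_mulVec {R n : Type*} [CommRing R] [StarRing R] [Fintype n]
    [DecidableEq n] {H : Matrix n n R} {w : n → R} {i : n} (hw : Hᴴ *ᵥ w = Pi.single i 1)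
    (v : n → R) : v i = star w ⬝ᵥ (H *ᵥ v) := by
  rw [dotProduct_mulVec, ← conjTranspose_conjTranspose H, ← star_mulVec, hw]
  simp

theorem ofReal_norm2_sq {n : ℕ} (x : Fin n → ℂ) : ((norm2 x ^ 2 : ℝ) : ℂ) = star x ⬝ᵥ x := by
  have h := inner_self_eq_norm_sq_to_K (𝕜 := ℂ) (WithLp.toLp 2 x)
  rw [EuclideanSpace.inner_toLp_toLp, dotProduct_comm] at h
  exact_mod_cast h.symm

section AppendedRow

variable {R : Type*} [CommRing R] [StarRing R] {m : ℕ} {H : Matrix (Fin (m + 1)) (Fin (m + 1)) R}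
  {Hb : Matrix (Fin (m + 2)) (Fin (m + 1)) R} {η : R}

theorem conjTranspose_mulVec_residual_of_appendRow
    (hTop : Hb.submatrix Fin.castSucc id = H)
    (hBot : ∀ j, Hb (Fin.last (m + 1)) j = η * (Pi.single (Fin.last m) (1 : R) : Fin (m + 1) → R) j)
    (β : R) (y : Fin (m + 1) → R) :
    Hbᴴ *ᵥ (β • Pi.single 0 1 - Hb *ᵥ y) =
      Hᴴ *ᵥ (β • Pi.single 0 1 - H *ᵥ y) -
        (star η * (η * y (Fin.last m))) • Pi.single (Fin.last m) 1 := by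
  subst hTop
  have hlast : Hb (Fin.last (m + 1)) = η • Pi.single (Fin.last m) 1 :=
    funext fun j => by simp [hBot]
  have htop : (fun i => (β • Pi.single 0 1 - Hb *ᵥ y : Fin (m + 2) → R) i.castSucc) =
      β • Pi.single 0 1 - Hb.submatrix Fin.castSucc id *ᵥ y := by
    ext i
    simp only [Pi.sub_apply, Pi.smul_apply, Pi.single_apply, Fin.castSucc_eq_zero_iff,
      sub_right_inj]
    rfl
  have hbot : (β • Pi.single 0 1 - Hb *ᵥ y : Fin (m + 2) → R) (Fin.last (m + 1)) =
      -(η * y (Fin.last m)) := by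
    rw [Pi.sub_apply, mulVec, hlast, smul_dotProduct, single_dotProduct]
    simp
  rw [conjTranspose_mulVec_eq_castSucc_add_last, htop, hbot, hlast, star_smul,
    ← Pi.single_star, star_one, smul_smul, neg_mul, neg_smul,
    ← sub_eq_add_neg, mul_comm _ (star η)]

theorem conjTranspose_mulVec_residual_eq_zero_of_appendRow
    (hTop : Hb.submatrix Fin.castSucc id = H)
    (hBot : ∀ j, Hb (Fin.last (m + 1)) j = η * (Pi.single (Fin.last m) (1 : R) : Fin (m + 1) → R) j)
    {β c : R} {u v w : Fin (m + 1) → R}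
    (hu : H *ᵥ u = β • Pi.single 0 1) (hv : H *ᵥ v = star η • w)
    (hw : Hᴴ *ᵥ w = Pi.single (Fin.last m) 1)
    (hc : c * (1 + star η * η * (star w ⬝ᵥ w)) = η * u (Fin.last m)) :
    Hbᴴ *ᵥ (β • Pi.single 0 1 - Hb *ᵥ (u - c • v)) = 0 := by
  have hvlast : v (Fin.last m) = star η * (star w ⬝ᵥ w) := by
    rw [apply_eq_star_dotProduct_mulVec hw v, hv, dotProduct_smul, smul_eq_mul]
  have hylast : η * (u - c • v) (Fin.last m) = c := by
    simp only [Pi.sub_apply, Pi.smul_apply, smul_eq_mul, hvlast]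
    linear_combination -hc
  have hres : β • Pi.single 0 1 - H *ᵥ (u - c • v) = (c * star η) • w := by
    rw [mulVec_sub, mulVec_smul, hu, hv, sub_sub_cancel, smul_smul]
  rw [conjTranspose_mulVec_residual_of_appendRow hTop hBot, hylast, hres, mulVec_smul, hw,
    mul_comm c, sub_self]

end AppendedRow

theorem stmt11_general {m : ℕ} (H : Matrix (Fin (m + 1)) (Fin (m + 1)) ℂ)
    (hH : IsUnit H) (η : ℂ) (β : ℝ)
    (Hb : Matrix (Fin (m + 2)) (Fin (m + 1)) ℂ)
    (hTop : Hb.submatrix Fin.castSucc id = H)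
    (hBot : ∀ j, Hb (Fin.last (m + 1)) j = η * (Pi.single (Fin.last m) (1 : ℂ) : Fin (m + 1) → ℂ) j)
    (yg : Fin (m + 1) → ℂ)
    (hyg : ∀ z : Fin (m + 1) → ℂ,
      norm2 ((β : ℂ) • (Pi.single 0 1 : Fin (m + 2) → ℂ) - Hb *ᵥ yg) ≤
        norm2 ((β : ℂ) • (Pi.single 0 1 : Fin (m + 2) → ℂ) - Hb *ᵥ z)) :
    yg = H⁻¹ *ᵥ ((β : ℂ) • (Pi.single 0 1 : Fin (m + 1) → ℂ)) -
      ((η * (H⁻¹ *ᵥ ((β : ℂ) • (Pi.single 0 1 : Fin (m + 1) → ℂ))) (Fin.last m)) /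
          ((1 + (norm2 (η • ((Hᴴ)⁻¹ *ᵥ (Pi.single (Fin.last m) 1 : Fin (m + 1) → ℂ)))) ^ 2 : ℝ) : ℂ)) •
        (H⁻¹ *ᵥ (starRingEnd ℂ η • ((Hᴴ)⁻¹ *ᵥ (Pi.single (Fin.last m) 1 : Fin (m + 1) → ℂ)))) := by
  set w := (Hᴴ)⁻¹ *ᵥ (Pi.single (Fin.last m) 1 : Fin (m + 1) → ℂ)
  set D : ℝ := 1 + norm2 (η • w) ^ 2
  have hD : (D : ℂ) = 1 + star η * η * (star w ⬝ᵥ w) := by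
    rw [Complex.ofReal_add, ofReal_norm2_sq, star_smul, smul_dotProduct, dotProduct_smul]
    simp only [Complex.ofReal_one, smul_eq_mul, mul_assoc]
  have hD0 : (D : ℂ) ≠ 0 := Complex.ofReal_ne_zero.mpr (by positivity)
  refine mulVec_injective_of_submatrix Fin.castSucc (hTop ▸ mulVec_injective_iff_isUnit.mpr hH) ?_
  refine mulVec_eq_of_forall_norm_residual_le hyg <|
    conjTranspose_mulVec_residual_eq_zero_of_appendRow hTop hBot (mulVec_nonsing_inv_mulVec hH _)
      (mulVec_nonsing_inv_mulVec hH _)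
      (mulVec_nonsing_inv_mulVec ((isUnit_conjTranspose H).mpr hH) _) ?_
  rw [← hD, div_mul_cancel₀ _ hD0]

theorem stmt11 {m : ℕ} (H : Matrix (Fin (m + 1)) (Fin (m + 1)) ℂ)
    (hH : IsUnit H) (η : ℂ) (β : ℝ) (hβ : 0 < β)
    (Hb : Matrix (Fin (m + 2)) (Fin (m + 1)) ℂ)
    (hTop : Hb.submatrix Fin.castSucc id = H)
    (hBot : ∀ j, Hb (Fin.last (m + 1)) j = η * (Pi.single (Fin.last m) (1 : ℂ) : Fin (m + 1) → ℂ) j)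
    (yg : Fin (m + 1) → ℂ)
    (hyg : ∀ z : Fin (m + 1) → ℂ,
      norm2 ((β : ℂ) • (Pi.single 0 1 : Fin (m + 2) → ℂ) - Hb *ᵥ yg) ≤
        norm2 ((β : ℂ) • (Pi.single 0 1 : Fin (m + 2) → ℂ) - Hb *ᵥ z)) :
    yg = H⁻¹ *ᵥ ((β : ℂ) • (Pi.single 0 1 : Fin (m + 1) → ℂ)) -
      ((η * (H⁻¹ *ᵥ ((β : ℂ) • (Pi.single 0 1 : Fin (m + 1) → ℂ))) (Fin.last m)) /
          ((1 + (norm2 (η • ((Hᴴ)⁻¹ *ᵥ (Pi.single (Fin.last m) 1 : Fin (m + 1) → ℂ)))) ^ 2 : ℝ) : ℂ)) •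
        (H⁻¹ *ᵥ (starRingEnd ℂ η • ((Hᴴ)⁻¹ *ᵥ (Pi.single (Fin.last m) 1 : Fin (m + 1) → ℂ)))) :=
  stmt11_general H hH η β Hb hTop hBot yg hyg
end

section
/- With H ∈ ℂ^{m×m} invertible, η ∈ ℂ, H̄ = [H; η e_m^*], y^fom = H^{-1} β e_1, and y^gmres the least-squares minimizer of ‖β e_1 − H̄ y‖₂, define α = ‖η H^{-*} e_m‖₂, r^fom = (m+1)-vector β e_1 − H̄ y^fom, r^gmres = β e_1 − H̄ y^gmres. Then ‖r^fom − r^gmres‖₂ ≤ (α(1+α)/(1+α²)) ‖r^fom‖₂. -/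
open Matrix

/-! With `v = H y`, the residual of `y` is `(b - v, -⟪w, v⟫)` where `w = conj η • H⁻ᴴ e_m`, so
`‖r(y)‖² = ‖b - v‖² + |⟪w, v⟫|²`; FOM takes `v = b`, so `‖r^fom‖ = |⟪w, b⟫|`. Completing the square
shows that GMRES takes `b - v = k • w` with `k = ⟪w, b⟫ / (1 + α²)`. Hence
`‖r^fom - r^gmres‖² = |k|² α² (1 + α²)` and `‖r^fom‖ = |k| (1 + α²)`, so the ratio is exactly
`α / √(1 + α²)`, which is at most `α (1 + α) / (1 + α²)` because `1 + α² ≤ (1 + α)²`. -/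

open scoped InnerProductSpace

section LeastSquares

variable {𝕜 E : Type*} [RCLike 𝕜] [NormedAddCommGroup E] [InnerProductSpace 𝕜 E]

theorem norm_sq_add_norm_sub_inner_sq (w u : E) (c : 𝕜) :
    ‖u‖ ^ 2 + ‖c - ⟪w, u⟫_𝕜‖ ^ 2 =
      ‖c‖ ^ 2 / (1 + ‖w‖ ^ 2) + ‖u - (c / (1 + ‖w‖ ^ 2 : ℝ)) • w‖ ^ 2 +
        ‖⟪w, u - (c / (1 + ‖w‖ ^ 2 : ℝ)) • w⟫_𝕜‖ ^ 2 := by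
  set k : 𝕜 := c / (1 + ‖w‖ ^ 2 : ℝ)
  have hpos : (0 : ℝ) < 1 + ‖w‖ ^ 2 := by positivity
  have hc : c = k * (1 + ‖w‖ ^ 2 : ℝ) := by
    rw [div_mul_cancel₀]; exact_mod_cast hpos.ne'
  have hck : ‖c‖ ^ 2 / (1 + ‖w‖ ^ 2) = ‖k‖ ^ 2 * (1 + ‖w‖ ^ 2) := by
    rw [hc, norm_mul, RCLike.norm_ofReal, abs_of_pos hpos]; field_simp
  obtain ⟨x, rfl⟩ : ∃ x, u = k • w + x := ⟨u - k • w, by abel⟩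
  have hlast : c - ⟪w, k • w + x⟫_𝕜 = k - ⟪w, x⟫_𝕜 := by
    rw [inner_add_right, inner_smul_right, inner_self_eq_norm_sq_to_K, hc]; push_cast; ring
  rw [hlast, hck, add_sub_cancel_left, norm_add_sq (𝕜 := 𝕜), norm_sub_sq (𝕜 := 𝕜), inner_smul_left,
    norm_smul, RCLike.inner_apply, mul_comm ⟪w, x⟫_𝕜]
  ring

theorem eq_smul_of_isMinOn (w u : E) (c : 𝕜)
    (hu : IsMinOn (fun v => ‖v‖ ^ 2 + ‖c - ⟪w, v⟫_𝕜‖ ^ 2) Set.univ u) :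
    u = (c / (1 + ‖w‖ ^ 2 : ℝ)) • w := by
  have hmin := isMinOn_univ_iff.mp hu ((c / (1 + ‖w‖ ^ 2 : ℝ)) • w)
  simp only [norm_sq_add_norm_sub_inner_sq w _ c, sub_self, norm_zero, inner_zero_right] at hmin
  have hx : ‖u - (c / (1 + ‖w‖ ^ 2 : ℝ)) • w‖ ^ 2 ≤ 0 := by
    nlinarith [sq_nonneg ‖⟪w, u - (c / (1 + ‖w‖ ^ 2 : ℝ)) • w⟫_𝕜‖]
  rwa [sq_nonpos_iff, norm_eq_zero, sub_eq_zero] at hx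

theorem norm_sq_add_inner_sq_le_of_isMinOn (w u : E) (c : 𝕜)
    (hu : IsMinOn (fun v => ‖v‖ ^ 2 + ‖c - ⟪w, v⟫_𝕜‖ ^ 2) Set.univ u) :
    ‖u‖ ^ 2 + ‖⟪w, u⟫_𝕜‖ ^ 2 ≤ (‖w‖ * (1 + ‖w‖) / (1 + ‖w‖ ^ 2) * ‖c‖) ^ 2 := by
  set α := ‖w‖
  have hpos : (0 : ℝ) < 1 + α ^ 2 := by positivity
  set k : 𝕜 := c / (1 + α ^ 2 : ℝ)
  have hc : ‖c‖ = ‖k‖ * (1 + α ^ 2) := by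
    rw [norm_div, RCLike.norm_ofReal, abs_of_pos hpos, div_mul_cancel₀ _ hpos.ne']
  rw [eq_smul_of_isMinOn w u c hu, inner_smul_right, inner_self_eq_norm_sq_to_K, norm_smul,
    norm_mul, norm_pow, RCLike.norm_ofReal, abs_norm, hc]
  calc (‖k‖ * α) ^ 2 + (‖k‖ * α ^ 2) ^ 2 = α ^ 2 * (1 + α ^ 2) * ‖k‖ ^ 2 := by ring
    _ ≤ α ^ 2 * (1 + α) ^ 2 * ‖k‖ ^ 2 := by gcongr; nlinarith [norm_nonneg w]
    _ = (α * (1 + α) / (1 + α ^ 2) * (‖k‖ * (1 + α ^ 2))) ^ 2 := by field_simp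

theorem norm_sub_sq_add_inner_sub_sq_le_of_isMinOn (w b v : E)
    (hv : IsMinOn (fun v => ‖b - v‖ ^ 2 + ‖⟪w, v⟫_𝕜‖ ^ 2) Set.univ v) :
    ‖v - b‖ ^ 2 + ‖⟪w, v - b⟫_𝕜‖ ^ 2 ≤ (‖w‖ * (1 + ‖w‖) / (1 + ‖w‖ ^ 2) * ‖⟪w, b⟫_𝕜‖) ^ 2 := by
  have hu : IsMinOn (fun u => ‖u‖ ^ 2 + ‖⟪w, b⟫_𝕜 - ⟪w, u⟫_𝕜‖ ^ 2) Set.univ (b - v) := by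
    refine isMinOn_univ_iff.mpr fun u => ?_
    simpa only [sub_sub_cancel, ← inner_sub_right] using isMinOn_univ_iff.mp hv (b - u)
  simpa only [norm_sub_rev v b, ← norm_neg ⟪w, v - b⟫_𝕜, ← inner_neg_right, neg_sub] using
    norm_sq_add_inner_sq_le_of_isMinOn w (b - v) _ hu

end LeastSquares

theorem norm2_eq_norm_toLp {n : ℕ} (x : Fin n → ℂ) : norm2 x = ‖WithLp.toLp 2 x‖ := rfl

theorem norm2_nonneg {n : ℕ} (x : Fin n → ℂ) : 0 ≤ norm2 x := norm_nonneg _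

theorem norm2_sq_eq_init_add_last {n : ℕ} (x : Fin (n + 1) → ℂ) :
    norm2 x ^ 2 = norm2 (Fin.init x) ^ 2 + ‖x (Fin.last n)‖ ^ 2 := by
  simp only [norm2_eq_norm_toLp, EuclideanSpace.norm_sq_eq, Fin.sum_univ_castSucc]
  rfl

theorem inner_smul_conjTranspose_inv_mulVec_single {𝕜 ι : Type*} [RCLike 𝕜] [Fintype ι]
    [DecidableEq ι] {H : Matrix ι ι 𝕜} (hH : IsUnit H) (η : 𝕜) (i : ι) (y : ι → 𝕜) :
    ⟪WithLp.toLp 2 (star η • (Hᴴ)⁻¹ *ᵥ Pi.single i 1), WithLp.toLp 2 (H *ᵥ y)⟫_𝕜 = η * y i := by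
  rw [EuclideanSpace.inner_toLp_toLp, star_smul, star_star, star_mulVec, ← conjTranspose_nonsing_inv,
    conjTranspose_conjTranspose, dotProduct_smul, dotProduct_comm, ← dotProduct_mulVec,
    mulVec_mulVec, nonsing_inv_mul _ ((isUnit_iff_isUnit_det H).mp hH), one_mulVec]
  simp

section Hessenberg

variable {m : ℕ} {H : Matrix (Fin (m + 1)) (Fin (m + 1)) ℂ} {η : ℂ}
  {Hb : Matrix (Fin (m + 2)) (Fin (m + 1)) ℂ}

theorem init_mulVec (hTop : Hb.submatrix Fin.castSucc id = H) (y : Fin (m + 1) → ℂ) :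
    Fin.init (Hb *ᵥ y) = H *ᵥ y := by
  subst hTop; rfl

theorem mulVec_apply_last
    (hBot : ∀ j, Hb (Fin.last (m + 1)) j = η * (Pi.single (Fin.last m) (1 : ℂ) : Fin (m + 1) → ℂ) j)
    (y : Fin (m + 1) → ℂ) :
    (Hb *ᵥ y) (Fin.last (m + 1)) = η * y (Fin.last m) := by
  simp [mulVec, dotProduct, hBot, Pi.single_apply]

theorem norm2_sub_mulVec_sq (hTop : Hb.submatrix Fin.castSucc id = H)
    (hBot : ∀ j, Hb (Fin.last (m + 1)) j = η * (Pi.single (Fin.last m) (1 : ℂ) : Fin (m + 1) → ℂ) j)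
    (b : Fin (m + 2) → ℂ) (y : Fin (m + 1) → ℂ) :
    norm2 (b - Hb *ᵥ y) ^ 2 =
      norm2 (Fin.init b - H *ᵥ y) ^ 2 + ‖b (Fin.last (m + 1)) - η * y (Fin.last m)‖ ^ 2 := by
  rw [norm2_sq_eq_init_add_last, ← init_mulVec hTop, ← mulVec_apply_last hBot]
  rfl

theorem norm2_smul_single_sub_mulVec_sq (hTop : Hb.submatrix Fin.castSucc id = H)
    (hBot : ∀ j, Hb (Fin.last (m + 1)) j = η * (Pi.single (Fin.last m) (1 : ℂ) : Fin (m + 1) → ℂ) j)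
    (c : ℂ) (y : Fin (m + 1) → ℂ) :
    norm2 (c • Pi.single 0 1 - Hb *ᵥ y) ^ 2 =
      norm2 (c • Pi.single 0 1 - H *ᵥ y) ^ 2 + ‖η * y (Fin.last m)‖ ^ 2 := by
  have hinit : Fin.init (c • Pi.single 0 1 : Fin (m + 2) → ℂ) = c • Pi.single 0 1 :=
    funext fun i => by simp [Fin.init, Pi.single_apply, Fin.castSucc_eq_zero_iff]
  rw [norm2_sub_mulVec_sq hTop hBot, hinit, Pi.smul_apply, Pi.single_eq_of_ne (Fin.last_pos).ne',
    smul_zero, zero_sub, norm_neg]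

end Hessenberg

theorem stmt12_general {m : ℕ} (H : Matrix (Fin (m + 1)) (Fin (m + 1)) ℂ)
    (hH : IsUnit H) (η : ℂ) (β : ℝ)
    (Hb : Matrix (Fin (m + 2)) (Fin (m + 1)) ℂ)
    (hTop : Hb.submatrix Fin.castSucc id = H)
    (hBot : ∀ j, Hb (Fin.last (m + 1)) j = η * (Pi.single (Fin.last m) (1 : ℂ) : Fin (m + 1) → ℂ) j)
    (yf yg : Fin (m + 1) → ℂ)
    (hyf : yf = H⁻¹ *ᵥ ((β : ℂ) • (Pi.single 0 1 : Fin (m + 1) → ℂ)))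
    (hyg : ∀ z : Fin (m + 1) → ℂ,
      norm2 ((β : ℂ) • (Pi.single 0 1 : Fin (m + 2) → ℂ) - Hb *ᵥ yg) ≤
        norm2 ((β : ℂ) • (Pi.single 0 1 : Fin (m + 2) → ℂ) - Hb *ᵥ z))
    (α : ℝ) (hα : α = norm2 (η • ((Hᴴ)⁻¹ *ᵥ (Pi.single (Fin.last m) 1 : Fin (m + 1) → ℂ)))) :
    norm2 (((β : ℂ) • (Pi.single 0 1 : Fin (m + 2) → ℂ) - Hb *ᵥ yf) -
        ((β : ℂ) • (Pi.single 0 1 : Fin (m + 2) → ℂ) - Hb *ᵥ yg)) ≤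
      (α * (1 + α) / (1 + α ^ 2)) *
        norm2 ((β : ℂ) • (Pi.single 0 1 : Fin (m + 2) → ℂ) - Hb *ᵥ yf) := by
  set b : Fin (m + 1) → ℂ := (β : ℂ) • Pi.single 0 1
  set w := WithLp.toLp 2 (star η • (Hᴴ)⁻¹ *ᵥ Pi.single (Fin.last m) (1 : ℂ))
  have hw y : η * y (Fin.last m) = ⟪w, WithLp.toLp 2 (H *ᵥ y)⟫_ℂ :=
    (inner_smul_conjTranspose_inv_mulVec_single hH η _ y).symm
  have hwα : ‖w‖ = α := by
    rw [hα, norm2_eq_norm_toLp]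
    simp only [w, WithLp.toLp_smul, norm_smul, norm_star]
  have hres y : norm2 ((β : ℂ) • Pi.single 0 1 - Hb *ᵥ y) ^ 2 =
      ‖WithLp.toLp 2 b - WithLp.toLp 2 (H *ᵥ y)‖ ^ 2 + ‖⟪w, WithLp.toLp 2 (H *ᵥ y)⟫_ℂ‖ ^ 2 := by
    rw [norm2_smul_single_sub_mulVec_sq hTop hBot, hw, norm2_eq_norm_toLp, WithLp.toLp_sub]
  have hmin : IsMinOn (fun v => ‖WithLp.toLp 2 b - v‖ ^ 2 + ‖⟪w, v⟫_ℂ‖ ^ 2) Set.univ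
      (WithLp.toLp 2 (H *ᵥ yg)) := by
    refine isMinOn_univ_iff.mpr fun v => ?_
    obtain ⟨z, hz⟩ := mulVec_surjective_iff_isUnit.mpr hH v.ofLp
    rw [← WithLp.toLp_ofLp (p := 2) v, ← hz, ← hres, ← hres]
    exact pow_le_pow_left₀ (norm2_nonneg _) (hyg z) 2
  have hHyf : H *ᵥ yf = b := by
    rw [hyf, mulVec_mulVec, mul_nonsing_inv _ ((isUnit_iff_isUnit_det H).mp hH), one_mulVec]
  have hfom : norm2 ((β : ℂ) • Pi.single 0 1 - Hb *ᵥ yf) = ‖⟪w, WithLp.toLp 2 b⟫_ℂ‖ := by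
    rw [← sq_eq_sq₀ (norm2_nonneg _) (norm_nonneg _), hres, hHyf, sub_self, norm_zero,
      zero_pow two_ne_zero, zero_add]
  have hdiff : norm2 (((β : ℂ) • Pi.single 0 1 - Hb *ᵥ yf) -
      ((β : ℂ) • Pi.single 0 1 - Hb *ᵥ yg)) ^ 2 =
      ‖WithLp.toLp 2 (H *ᵥ yg) - WithLp.toLp 2 b‖ ^ 2 +
        ‖⟪w, WithLp.toLp 2 (H *ᵥ yg) - WithLp.toLp 2 b⟫_ℂ‖ ^ 2 := by
    rw [sub_sub_sub_cancel_left, norm2_sub_mulVec_sq hTop hBot, init_mulVec hTop,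
      mulVec_apply_last hBot, hw, hw, hHyf, ← inner_sub_right, norm2_eq_norm_toLp, WithLp.toLp_sub]
  rw [hfom, ← hwα, ← sq_le_sq₀ (norm2_nonneg _) (by positivity), hdiff]
  exact norm_sub_sq_add_inner_sub_sq_le_of_isMinOn w _ _ hmin

theorem stmt12 {m : ℕ} (H : Matrix (Fin (m + 1)) (Fin (m + 1)) ℂ)
    (hH : IsUnit H) (η : ℂ) (β : ℝ) (hβ : 0 < β)
    (Hb : Matrix (Fin (m + 2)) (Fin (m + 1)) ℂ)
    (hTop : Hb.submatrix Fin.castSucc id = H)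
    (hBot : ∀ j, Hb (Fin.last (m + 1)) j = η * (Pi.single (Fin.last m) (1 : ℂ) : Fin (m + 1) → ℂ) j)
    (yf yg : Fin (m + 1) → ℂ)
    (hyf : yf = H⁻¹ *ᵥ ((β : ℂ) • (Pi.single 0 1 : Fin (m + 1) → ℂ)))
    (hyg : ∀ z : Fin (m + 1) → ℂ,
      norm2 ((β : ℂ) • (Pi.single 0 1 : Fin (m + 2) → ℂ) - Hb *ᵥ yg) ≤
        norm2 ((β : ℂ) • (Pi.single 0 1 : Fin (m + 2) → ℂ) - Hb *ᵥ z))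
    (α : ℝ) (hα : α = norm2 (η • ((Hᴴ)⁻¹ *ᵥ (Pi.single (Fin.last m) 1 : Fin (m + 1) → ℂ)))) :
    norm2 (((β : ℂ) • (Pi.single 0 1 : Fin (m + 2) → ℂ) - Hb *ᵥ yf) -
        ((β : ℂ) • (Pi.single 0 1 : Fin (m + 2) → ℂ) - Hb *ᵥ yg)) ≤
      (α * (1 + α) / (1 + α ^ 2)) *
        norm2 ((β : ℂ) • (Pi.single 0 1 : Fin (m + 2) → ℂ) - Hb *ᵥ yf) :=
  stmt12_general H hH η β Hb hTop hBot yf yg hyf hyg α hα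
end

section
/- Under the inexact flexible Arnoldi relation (K + σM) Z̃_m + P_m = V_{m+1} H̄_m(σ; T_m), with V_{m+1} having orthonormal columns, ‖p_k‖₂ ≤ ε for each column of P_m, and H_m(σ; T_m) (top m×m block of H̄_m(σ; T_m)) invertible, let y^fom = H_m(σ; T_m)^{-1} β e_1 and r^fom = β v_1 − (K + σM) Z̃_m y^fom. Then ‖V_m^* r^fom‖₂ ≤ ε ‖y^fom‖₁, where V_m denotes the first m columns of V_{m+1}. -/
/-!
Because `V` has orthonormal columns, `(V.submatrix id f)ᴴ *ᵥ (V *ᵥ x) = x ∘ f`. By the Arnoldi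
relation the residual is `V (β e₁ - H̄ y) + P y`, and the first `m` coordinates of `β e₁ - H̄ y`
vanish since `H y = β e₁`. Hence `V_mᴴ r = V_mᴴ (P y)`; finally `V_mᴴ` is a contraction
(`‖V_m‖² = ‖V_mᴴ V_m‖ = 1`) and `‖P y‖ ≤ ∑ₖ |yₖ| ‖pₖ‖ ≤ ε ‖y‖₁`.
-/

open Matrix

namespace Matrix

variable {R : Type*} [CommRing R] [StarRing R] {ι κ ι' : Type*} [Fintype ι] [DecidableEq κ]
  {V : Matrix ι κ R}

theorem conjTranspose_submatrix_mul_of_conjTranspose_mul_self (hV : Vᴴ * V = 1) (f : ι' → κ) :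
    (V.submatrix id f)ᴴ * V = (1 : Matrix κ κ R).submatrix f id := by
  rw [← hV, submatrix_mul _ _ f id id Function.bijective_id, conjTranspose_submatrix,
    submatrix_id_id]

theorem conjTranspose_submatrix_mulVec_mulVec [Fintype κ] (hV : Vᴴ * V = 1) (f : ι' → κ)
    (x : κ → R) :
    (V.submatrix id f)ᴴ *ᵥ (V *ᵥ x) = x ∘ f := by
  rw [mulVec_mulVec, conjTranspose_submatrix_mul_of_conjTranspose_mul_self hV]
  ext i
  simp [mulVec, dotProduct, one_apply]

theorem conjTranspose_mul_self_submatrix [DecidableEq ι'] (hV : Vᴴ * V = 1) {f : ι' → κ}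
    (hf : f.Injective) : (V.submatrix id f)ᴴ * V.submatrix id f = 1 := by
  change ((V.submatrix id f)ᴴ * V).submatrix id f = 1
  rw [conjTranspose_submatrix_mul_of_conjTranspose_mul_self hV, submatrix_submatrix,
    Function.comp_id, Function.id_comp, submatrix_one f hf]

theorem conjTranspose_submatrix_mulVec_sub_mulVec_mulVec [Fintype κ] {ν : Type*} [Fintype ν]
    (hV : Vᴴ * V = 1) {A : Matrix ι ι R} {Z P : Matrix ι ν R} {H : Matrix κ ν R}
    (hrel : A * Z + P = V * H) (f : ι' → κ) (b : κ → R) (y : ν → R) :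
    (V.submatrix id f)ᴴ *ᵥ (V *ᵥ b - A *ᵥ (Z *ᵥ y)) =
      (b - H *ᵥ y) ∘ f + (V.submatrix id f)ᴴ *ᵥ (P *ᵥ y) := by
  have hAZ : A *ᵥ (Z *ᵥ y) = V *ᵥ (H *ᵥ y) - P *ᵥ y := by
    rw [mulVec_mulVec, mulVec_mulVec, ← hrel, add_mulVec, add_sub_cancel_right]
  rw [hAZ, sub_sub_eq_add_sub, add_sub_right_comm, ← mulVec_sub, mulVec_add,
    conjTranspose_submatrix_mulVec_mulVec hV]

end Matrix

open scoped Matrix.Norms.L2Operator in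
theorem norm2_conjTranspose_mulVec_le {n m : ℕ} {W : Matrix (Fin n) (Fin m) ℂ} (hW : Wᴴ * W = 1)
    (z : Fin n → ℂ) : norm2 (Wᴴ *ᵥ z) ≤ norm2 z := by
  have hW1 : ‖W‖ ≤ 1 := by
    have : ‖W‖ * ‖W‖ ≤ 1 := by
      rw [← l2_opNorm_conjTranspose_mul_self, hW, cstar_norm_def, map_one]
      exact ContinuousLinearMap.norm_id_le
    nlinarith [norm_nonneg W]
  calc norm2 (Wᴴ *ᵥ z) ≤ ‖Wᴴ‖ * norm2 z := l2_opNorm_mulVec Wᴴ _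
    _ ≤ norm2 z := by
      rw [l2_opNorm_conjTranspose]
      exact mul_le_of_le_one_left (norm_nonneg _) hW1

theorem norm2_mulVec_le_of_norm2_col_le {n m : ℕ} {P : Matrix (Fin n) (Fin m) ℂ} {ε : ℝ}
    (hP : ∀ j, norm2 (fun i => P i j) ≤ ε) (y : Fin m → ℂ) :
    norm2 (P *ᵥ y) ≤ ε * ∑ k, ‖y k‖ := by
  have hsum : WithLp.toLp 2 (P *ᵥ y) = ∑ k, y k • WithLp.toLp 2 (fun i => P i k) := by
    ext i
    simp [mulVec, dotProduct, mul_comm]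
  calc norm2 (P *ᵥ y) ≤ ∑ k, ‖y k‖ * norm2 (fun i => P i k) := by
        rw [norm2, WithLp.equiv_symm_apply, hsum]
        exact (norm_sum_le _ _).trans_eq (by simp_rw [norm_smul]; rfl)
    _ ≤ ∑ k, ‖y k‖ * ε := by gcongr with k; exact hP k
    _ = ε * ∑ k, ‖y k‖ := by rw [Finset.mul_sum]; simp_rw [mul_comm]

theorem stmt16_general {n m : ℕ} [NeZero m] (K M : Matrix (Fin n) (Fin n) ℂ) (σ : ℂ)
    (Zt P : Matrix (Fin n) (Fin m) ℂ)
    (V : Matrix (Fin n) (Fin (m + 1)) ℂ) (hV : Vᴴ * V = 1)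
    (Hσ : Matrix (Fin (m + 1)) (Fin m) ℂ) (β : ℂ) (ε : ℝ)
    (hrel : (K + σ • M) * Zt + P = V * Hσ)
    (hP : ∀ j : Fin m, norm2 (fun i => P i j) ≤ ε)
    (hinv : IsUnit (Hσ.submatrix Fin.castSucc id))
    (yf : Fin m → ℂ)
    (hyf : yf = (Hσ.submatrix Fin.castSucc id)⁻¹ *ᵥ (β • (Pi.single 0 1 : Fin m → ℂ))) :
    norm2 ((V.submatrix id Fin.castSucc)ᴴ *ᵥ
        ((β • fun i => V i 0) - (K + σ • M) *ᵥ (Zt *ᵥ yf))) ≤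
      ε * ∑ k : Fin m, ‖yf k‖ := by
  have hv₁ : (β • fun i => V i 0) = V *ᵥ (β • Pi.single 0 1) := by
    rw [mulVec_smul, mulVec_single_one]
    rfl
  have hfom : (Hσ.submatrix Fin.castSucc id) *ᵥ yf = β • Pi.single 0 1 := by
    rw [hyf, mulVec_mulVec, mul_nonsing_inv _ ((isUnit_iff_isUnit_det _).mp hinv), one_mulVec]
  have hgalerkin : (β • Pi.single 0 1 - Hσ *ᵥ yf) ∘ Fin.castSucc = 0 := by
    ext i
    change β • (Pi.single 0 1 : Fin (m + 1) → ℂ) i.castSucc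
      - (Hσ.submatrix Fin.castSucc id *ᵥ yf) i = 0
    simp [hfom, Pi.single_apply]
  rw [hv₁, conjTranspose_submatrix_mulVec_sub_mulVec_mulVec hV hrel, hgalerkin, zero_add]
  exact (norm2_conjTranspose_mulVec_le (conjTranspose_mul_self_submatrix hV
    (Fin.castSucc_injective m)) _).trans (norm2_mulVec_le_of_norm2_col_le hP yf)

theorem stmt16 {n m : ℕ} [NeZero m] (K M : Matrix (Fin n) (Fin n) ℂ) (σ : ℂ)
    (Zt P : Matrix (Fin n) (Fin m) ℂ)
    (V : Matrix (Fin n) (Fin (m + 1)) ℂ) (hV : Vᴴ * V = 1)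
    (Hσ : Matrix (Fin (m + 1)) (Fin m) ℂ) (β : ℂ) (ε : ℝ) (hε : 0 ≤ ε)
    (hrel : (K + σ • M) * Zt + P = V * Hσ)
    (hP : ∀ j : Fin m, norm2 (fun i => P i j) ≤ ε)
    (hinv : IsUnit (Hσ.submatrix Fin.castSucc id))
    (yf : Fin m → ℂ)
    (hyf : yf = (Hσ.submatrix Fin.castSucc id)⁻¹ *ᵥ (β • (Pi.single 0 1 : Fin m → ℂ))) :
    norm2 ((V.submatrix id Fin.castSucc)ᴴ *ᵥ
        ((β • fun i => V i 0) - (K + σ • M) *ᵥ (Zt *ᵥ yf))) ≤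
      ε * ∑ k : Fin m, ‖yf k‖ :=
  stmt16_general K M σ Zt P V hV Hσ β ε hrel hP hinv yf hyf
end
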